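/- Let SNR > 0 and let C(s) = log₂(e)·e^{1/s}·E₁(1/s). Then SNR·C'(SNR) < C(SNR); equivalently the factor √(C(SNR)/(SNR·C'(SNR))) by which power boosting increases the optimal pilot power fraction is strictly greater than 1. -/

import Mathlib

open MeasureTheory

/-- Exponential integral of order 1. -/
noncomputable def expInt (ζ : ℝ) : ℝ := ∫ t in Set.Ioi (1 : ℝ), t⁻¹ * Real.exp (-ζ * t)

/-- The ergodic Rayleigh-fading capacity `C(s) = log₂(e)·e^{1/s}·E₁(1/s)`. -/
noncomputable def capC (s : ℝ) : ℝ := Real.logb 2 (Real.exp 1) * Real.exp (1 / s) * expInt (1 / s)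

/-!
Write `ζ = 1 / s`, so that `C(s) = log₂ e · e^ζ E₁(ζ)`. Since `E₁'(ζ) = -e^{-ζ} / ζ`, the chain rule
gives `s · C'(s) = log₂ e - C(s) / s`, and the claim becomes `e^{-ζ} / (1 + ζ) < E₁(ζ)`. That bound
follows by integrating `e^{1-t} < 1/t` (i.e. `t < e^{t-1}`) for `t > 1` against `e^{-ζ t}`.
-/

open Real Set Filter

theorem setIntegral_lt_setIntegral_of_forall_lt {X : Type*} [MeasurableSpace X] {μ : Measure X}
    {s : Set X} (hs : MeasurableSet s) (hμs : μ s ≠ 0) {f g : X → ℝ}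
    (hf : IntegrableOn f s μ) (hg : IntegrableOn g s μ) (hlt : ∀ x ∈ s, f x < g x) :
    ∫ x in s, f x ∂μ < ∫ x in s, g x ∂μ := by
  rw [← sub_pos, ← integral_sub hg hf]
  have hnonneg : 0 ≤ᵐ[μ.restrict s] fun x => g x - f x :=
    (ae_restrict_iff' hs).2 (Eventually.of_forall fun x hx => (sub_pos.2 (hlt x hx)).le)
  rw [setIntegral_pos_iff_support_of_nonneg_ae hnonneg (hg.sub hf)]
  have hsupp : Function.support (fun x => g x - f x) ∩ s = s :=
    inter_eq_right.2 fun x hx => (sub_pos.2 (hlt x hx)).ne'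
  rw [hsupp]
  exact pos_iff_ne_zero.2 hμs

theorem integral_exp_neg_mul_Ioi {b : ℝ} (hb : 0 < b) (c : ℝ) :
    ∫ x in Ioi c, exp (-b * x) = exp (-b * c) / b := by
  rw [integral_exp_mul_Ioi (neg_lt_zero.2 hb), neg_div_neg_eq]

theorem integrableOn_inv_mul_exp_neg_mul_Ioi {ζ : ℝ} (hζ : 0 < ζ) :
    IntegrableOn (fun t => t⁻¹ * exp (-ζ * t)) (Ioi 1) := by
  refine (exp_neg_integrableOn_Ioi 1 hζ).mono' ?_ ?_
  · exact (continuousOn_inv₀.mono fun t (ht : 1 < t) => (zero_lt_one.trans ht).ne').mul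
      (by fun_prop) |>.aestronglyMeasurable measurableSet_Ioi
  · refine (ae_restrict_iff' measurableSet_Ioi).2 (Eventually.of_forall fun t (ht : 1 < t) => ?_)
    rw [norm_mul, norm_inv, Real.norm_of_nonneg (zero_lt_one.trans ht).le,
      Real.norm_of_nonneg (exp_pos _).le]
    exact mul_le_of_le_one_left (exp_pos _).le (inv_le_one_of_one_le₀ ht.le)

theorem exp_one_sub_lt_inv {t : ℝ} (ht : 1 < t) : exp (1 - t) < t⁻¹ := by
  rw [← neg_sub, exp_neg]
  gcongr
  linarith [add_one_lt_exp (sub_ne_zero.2 ht.ne')]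

theorem exp_neg_div_one_add_lt_expInt {ζ : ℝ} (hζ : 0 < ζ) :
    exp (-ζ) / (1 + ζ) < expInt ζ := by
  have h1ζ : 0 < 1 + ζ := by linarith
  have hlower : (fun t => exp (1 - t) * exp (-ζ * t)) = fun t => exp 1 * exp (-(1 + ζ) * t) := by
    ext t
    rw [← exp_add, ← exp_add]
    ring_nf
  calc exp (-ζ) / (1 + ζ) = ∫ t in Ioi 1, exp (1 - t) * exp (-ζ * t) := by
        rw [hlower, integral_const_mul, integral_exp_neg_mul_Ioi h1ζ, ← mul_div_assoc, ← exp_add]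
        ring_nf
    _ < expInt ζ :=
        setIntegral_lt_setIntegral_of_forall_lt measurableSet_Ioi (by simp)
          (hlower ▸ (exp_neg_integrableOn_Ioi 1 h1ζ).const_mul _)
          (integrableOn_inv_mul_exp_neg_mul_Ioi hζ)
          fun t ht => mul_lt_mul_of_pos_right (exp_one_sub_lt_inv ht) (exp_pos _)

theorem hasDerivAt_expInt {ζ : ℝ} (hζ : 0 < ζ) : HasDerivAt expInt (-(exp (-ζ) / ζ)) ζ := by
  have hζ2 : 0 < ζ / 2 := half_pos hζ
  have key := hasDerivAt_integral_of_dominated_loc_of_deriv_le (μ := volume.restrict (Ioi 1))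
    (F := fun x t : ℝ => t⁻¹ * exp (-x * t)) (F' := fun x t => -exp (-x * t))
    (bound := fun t => exp (-(ζ / 2) * t)) (Metric.ball_mem_nhds ζ hζ2)
    ?_ (integrableOn_inv_mul_exp_neg_mul_Ioi hζ) ?_ ?_ (exp_neg_integrableOn_Ioi 1 hζ2) ?_
  · rw [integral_neg, integral_exp_neg_mul_Ioi hζ, mul_one] at key
    exact key.2
  · exact Eventually.of_forall fun x => by fun_prop
  · fun_prop
  · refine (ae_restrict_iff' measurableSet_Ioi).2 (Eventually.of_forall fun t (ht : 1 < t) x hx => ?_)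
    have hx2 : ζ / 2 < x := by
      have := (abs_lt.1 (Real.dist_eq x ζ ▸ Metric.mem_ball.1 hx)).1
      linarith
    rw [norm_neg, Real.norm_of_nonneg (exp_pos _).le, exp_le_exp]
    nlinarith
  · refine (ae_restrict_iff' measurableSet_Ioi).2 (Eventually.of_forall fun t (ht : 1 < t) x _ => ?_)
    have ht0 : t ≠ 0 := (zero_lt_one.trans ht).ne'
    have hlin : HasDerivAt (fun y : ℝ => -y * t) (-t) x := by
      simpa using (hasDerivAt_id x).neg.mul_const t
    exact (hlin.exp.const_mul t⁻¹).congr_deriv (by field_simp)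

theorem hasDerivAt_capC {s : ℝ} (hs : 0 < s) :
    HasDerivAt capC ((logb 2 (exp 1) - capC s / s) / s) s := by
  have hζ : 0 < 1 / s := one_div_pos.2 hs
  have hinv : HasDerivAt (fun s : ℝ => 1 / s) (-(1 / s ^ 2)) s := by
    simpa [one_div] using hasDerivAt_inv hs.ne'
  have h := ((((hasDerivAt_exp (1 / s)).const_mul (logb 2 (exp 1))).mul
    (hasDerivAt_expInt hζ)).comp s hinv)
  refine h.congr_deriv ?_
  simp only [capC, exp_neg, one_div]
  field_simp
  ring

/-- For every `SNR > 0`, `SNR·C'(SNR) < C(SNR)`. -/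
theorem snr_deriv_lt_cap (SNR : ℝ) (hSNR : 0 < SNR) :
    SNR * deriv capC SNR < capC SNR := by
  have hζ : 0 < 1 / SNR := one_div_pos.2 hSNR
  have hlog : 0 < logb 2 (exp 1) := by rw [logb, log_exp]; positivity
  have hbound := mul_lt_mul_of_pos_left (exp_neg_div_one_add_lt_expInt hζ) (exp_pos (1 / SNR))
  rw [← mul_div_assoc, ← exp_add, add_neg_cancel, exp_zero, div_lt_iff₀' (by positivity)] at hbound
  have hcap : capC SNR + capC SNR / SNR =
      logb 2 (exp 1) * ((1 + 1 / SNR) * (exp (1 / SNR) * expInt (1 / SNR))) := by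
    unfold capC; ring
  rw [(hasDerivAt_capC hSNR).deriv, mul_div_cancel₀ _ hSNR.ne', sub_lt_iff_lt_add, hcap]
  exact lt_mul_of_one_lt_right hlog hbound
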